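/- (Monotonicity Law) Let w and w̃ be two symmetric nonnegative edge-weight functions on the same node set N = {1,…,n} with w̃_ij ≤ w_ij for all i, j, such that both induced random walks are irreducible and aperiodic. Let m_ij and m̃_ij denote the mean first passage times of the random walks with weights w and w̃ respectively, and let w = Σ_{i,j} w_ij and w̃ = Σ_{i,j} w̃_ij denote the total edge weights. Then for all nodes a, v: m_av + m_va ≤ (w/w̃)(m̃_av + m̃_va). -/

import Mathlib

/-
The commute time is the total weight times an effective resistance. Some power of the
transition matrix `Z` is entrywise positive, so by Dobrushin's contraction `Z^k → eπᵀ`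
geometrically; hence the fundamental matrix `Y` exists and `Y + eπᵀ` inverts `I - Z + eπᵀ`.
Consequently `x = (Y + eπᵀ) D⁻¹ (e_a - e_v)` solves `L x = e_a - e_v` for the weighted Laplacian
`L = D - w`, and reading `m_av + m_va` off `Y` gives `m_av + m_va = w (x_a - x_v)`. Finally
`L_w̃ ≤ L_w` in the Loewner order, since `L_w - L_w̃` is the Laplacian of the nonnegative weights
`w - w̃`, and the value `bᵀx` at a solution of `L x = b` is antitone in `L` (Rayleigh
monotonicity).
-/

open Matrix

noncomputable section

/-- transition matrix of the random walk on a weighted undirected graph: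
`Z_ij = w_ij / Σ_k w_ik`. -/
def walkZ {V : Type*} [Fintype V] (w : V → V → ℝ) : Matrix V V ℝ :=
  Matrix.of fun i j => w i j / ∑ k, w i k

/-- stationary distribution of the random walk: `π_i = (Σ_k w_ik)/w`, where
`w` is the total edge weight. -/
def statPi {V : Type*} [Fintype V] (w : V → V → ℝ) : V → ℝ :=
  fun i => (∑ k, w i k) / ∑ a, ∑ b, w a b

/-- the fundamental matrix `Y = Σ_{k=0}^∞ (Z^k − Z^∞)` of the random walk,
where `Z^∞ = e πᵀ`. -/
def walkY {V : Type*} [Fintype V] [DecidableEq V] (w : V → V → ℝ) : Matrix V V ℝ :=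
  Matrix.of fun i j => ∑' k : ℕ, ((walkZ w ^ k) i j - statPi w j)

/-- the mean first passage time `m_ij = (Y_jj − Y_ij)/π_j` from `i` to `j` of
the random walk on the weighted graph with weights `w`. -/
def walkM {V : Type*} [Fintype V] [DecidableEq V] (w : V → V → ℝ) (i j : V) : ℝ :=
  (walkY w j j - walkY w i j) / statPi w j

open scoped MatrixOrder

lemma summable_pow_div {θ : ℝ} (h0 : 0 ≤ θ) (h1 : θ < 1) {r : ℕ} (hr : 0 < r) :
    Summable fun m : ℕ => θ ^ (m / r) := by
  have : NeZero r := ⟨hr.ne'⟩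
  have hprod : Summable fun p : ℕ × Fin r => θ ^ p.1 := by
    simpa using (summable_geometric_of_lt_one h0 h1).mul_of_nonneg
      (Summable.of_finite (f := fun _ : Fin r => (1 : ℝ))) (fun k => pow_nonneg h0 k)
      (fun _ => zero_le_one)
  exact (Nat.divModEquiv r).summable_iff.mpr hprod

namespace Matrix

section Loewner

variable {V : Type*} [Fintype V]

lemma dotProduct_le_of_le_of_mulVec_eq {L L' : Matrix V V ℝ} (h0 : 0 ≤ L') (hle : L' ≤ L)
    {b y z : V → ℝ} (hy : L *ᵥ y = b) (hz : L' *ᵥ z = b) : b ⬝ᵥ y ≤ b ⬝ᵥ z := by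
  have hL' : L'.PosSemidef := nonneg_iff_posSemidef.mp h0
  have hzy : z ⬝ᵥ (L' *ᵥ y) = b ⬝ᵥ y := by
    rw [dotProduct_mulVec, ← mulVec_transpose, ← conjTranspose_eq_transpose_of_trivial,
      hL'.isHermitian, hz]
  have hgap := (le_iff.mp hle).dotProduct_mulVec_nonneg y
  have hdiff := hL'.dotProduct_mulVec_nonneg (y - z)
  simp only [star_trivial, sub_mulVec, mulVec_sub, dotProduct_sub, sub_dotProduct, hy, hz,
    hzy] at hgap hdiff
  linarith [dotProduct_comm y b, dotProduct_comm z b]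

end Loewner

variable {V : Type*} [Fintype V] [DecidableEq V]

def weightedLaplacian (w : V → V → ℝ) : Matrix V V ℝ :=
  diagonal (fun i => ∑ k, w i k) - of w

lemma weightedLaplacian_sub (w w' : V → V → ℝ) :
    weightedLaplacian (w - w') = weightedLaplacian w - weightedLaplacian w' := by
  ext i j
  simp only [weightedLaplacian, sub_apply, diagonal_apply, of_apply, Pi.sub_apply,
    Finset.sum_sub_distrib]
  split_ifs <;> ring

lemma weightedLaplacian_mulVec_apply (w : V → V → ℝ) (x : V → ℝ) (i : V) :
    (weightedLaplacian w *ᵥ x) i = ∑ j, w i j * (x i - x j) := by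
  rw [weightedLaplacian, sub_mulVec, Pi.sub_apply, mulVec_diagonal, Finset.sum_mul]
  simp only [mulVec, dotProduct, of_apply, mul_sub, Finset.sum_sub_distrib]

lemma dotProduct_weightedLaplacian_mulVec {w : V → V → ℝ} (hw : ∀ i j, w i j = w j i)
    (x : V → ℝ) :
    x ⬝ᵥ (weightedLaplacian w *ᵥ x) = (∑ i, ∑ j, w i j * (x i - x j) ^ 2) / 2 := by
  have hswap :
      ∑ i, ∑ j, w i j * x i * (x i - x j) = ∑ i, ∑ j, w i j * -x j * (x i - x j) := by
    rw [Finset.sum_comm]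
    refine Finset.sum_congr rfl fun i _ => Finset.sum_congr rfl fun j _ => ?_
    rw [hw]; ring
  have hform : x ⬝ᵥ (weightedLaplacian w *ᵥ x) = ∑ i, ∑ j, w i j * x i * (x i - x j) := by
    simp only [dotProduct, weightedLaplacian_mulVec_apply, Finset.mul_sum]
    exact Finset.sum_congr rfl fun i _ => Finset.sum_congr rfl fun j _ => by ring
  rw [hform, eq_div_iff two_ne_zero, mul_two]
  nth_rewrite 2 [hswap]
  simp only [← Finset.sum_add_distrib]
  exact Finset.sum_congr rfl fun i _ => Finset.sum_congr rfl fun j _ => by ring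

lemma isHermitian_weightedLaplacian {w : V → V → ℝ} (hw : ∀ i j, w i j = w j i) :
    (weightedLaplacian w).IsHermitian := by
  ext i j
  simp only [conjTranspose_apply, star_trivial, weightedLaplacian, sub_apply, diagonal_apply,
    of_apply, hw i j, eq_comm (a := i)]
  split_ifs with h <;> simp [h]

lemma posSemidef_weightedLaplacian {w : V → V → ℝ} (hw : ∀ i j, w i j = w j i)
    (hnn : ∀ i j, 0 ≤ w i j) : (weightedLaplacian w).PosSemidef :=
  .of_dotProduct_mulVec_nonneg (isHermitian_weightedLaplacian hw) fun x => by
    rw [star_trivial, dotProduct_weightedLaplacian_mulVec hw]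
    have := fun i j => mul_nonneg (hnn i j) (sq_nonneg (x i - x j))
    have := Finset.sum_nonneg fun i (_ : i ∈ Finset.univ) =>
      Finset.sum_nonneg fun j (_ : j ∈ Finset.univ) => this i j
    positivity

section Markov

variable {P : Matrix V V ℝ} {π : V → ℝ} {δ : ℝ}

lemma card_mul_le_one_of_forall_le (hP : P ∈ rowStochastic ℝ V) (hδ : ∀ i k, δ ≤ P i k)
    (i : V) : Fintype.card V * δ ≤ 1 := by
  simpa [sum_row_of_mem_rowStochastic hP i] using
    Finset.sum_le_sum fun k (_ : k ∈ Finset.univ) => hδ i k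

-- Dobrushin: rows `i` and `i'` share a mass `∑ k, min (P i k) (P i' k) ≥ card V * δ`, which
-- cancels in the difference.
lemma mulVec_apply_sub_mulVec_apply_le (hP : P ∈ rowStochastic ℝ V) (hδ : ∀ i k, δ ≤ P i k)
    {f : V → ℝ} {c : ℝ} (hf : ∀ k k', f k - f k' ≤ c) (i i' : V) :
    (P *ᵥ f) i - (P *ᵥ f) i' ≤ (1 - Fintype.card V * δ) * c := by
  have : Nonempty V := ⟨i⟩
  obtain ⟨k₀, hk₀⟩ := Finite.exists_min f
  have hc : 0 ≤ c := by simpa using hf k₀ k₀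
  have hrow := sum_row_of_mem_rowStochastic hP
  have hterm : ∀ k, (P i k - P i' k) * (f k - f k₀) ≤ (P i k - min (P i k) (P i' k)) * c := by
    intro k
    rcases le_total (P i k) (P i' k) with h | h
    · rw [min_eq_left h, sub_self, zero_mul]
      exact mul_nonpos_of_nonpos_of_nonneg (sub_nonpos.2 h) (sub_nonneg.2 (hk₀ k))
    · rw [min_eq_right h]
      exact mul_le_mul_of_nonneg_left (hf k k₀) (sub_nonneg.2 h)
  have hmin : Fintype.card V * δ ≤ ∑ k, min (P i k) (P i' k) := by
    simpa using Finset.sum_le_sum fun k (_ : k ∈ Finset.univ) => le_min (hδ i k) (hδ i' k)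
  calc (P *ᵥ f) i - (P *ᵥ f) i' = ∑ k, (P i k - P i' k) * (f k - f k₀) := by
        simp only [mulVec, dotProduct, sub_mul, mul_sub, Finset.sum_sub_distrib,
          ← Finset.sum_mul, hrow]
        ring
    _ ≤ ∑ k, (P i k - min (P i k) (P i' k)) * c := Finset.sum_le_sum fun k _ => hterm k
    _ = (1 - ∑ k, min (P i k) (P i' k)) * c := by
        rw [← Finset.sum_mul, Finset.sum_sub_distrib, hrow]
    _ ≤ (1 - Fintype.card V * δ) * c := by gcongr

lemma pow_apply_sub_pow_apply_le (hP : P ∈ rowStochastic ℝ V) {r : ℕ} (hr : 0 < r)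
    (hδ : ∀ i k, δ ≤ (P ^ r) i k) (j : V) (m : ℕ) (i i' : V) :
    (P ^ m) i j - (P ^ m) i' j ≤ (1 - Fintype.card V * δ) ^ (m / r) := by
  induction m using Nat.strong_induction_on generalizing i i' with
  | _ m ih =>
  rcases lt_or_ge m r with hm | hm
  · have hPm := pow_mem hP m
    rw [Nat.div_eq_of_lt hm, pow_zero]
    linarith [le_one_of_mem_rowStochastic hPm (i := i) (j := j),
      nonneg_of_mem_rowStochastic hPm (i := i') (j := j)]
  · have hsplit : P ^ m = P ^ r * P ^ (m - r) := by rw [← pow_add, Nat.add_sub_cancel' hm]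
    calc (P ^ m) i j - (P ^ m) i' j
        = (P ^ r *ᵥ fun k => (P ^ (m - r)) k j) i
            - (P ^ r *ᵥ fun k => (P ^ (m - r)) k j) i' := by
          rw [hsplit]; rfl
      _ ≤ (1 - Fintype.card V * δ) * (1 - Fintype.card V * δ) ^ ((m - r) / r) :=
          mulVec_apply_sub_mulVec_apply_le (pow_mem hP r) hδ (ih (m - r) (by omega)) i i'
      _ = (1 - Fintype.card V * δ) ^ (m / r) := by
          rw [Nat.div_eq_sub_div hr hm, pow_succ, mul_comm]

lemma vecMul_pow_of_vecMul_eq (hπ : π ᵥ* P = π) (m : ℕ) : π ᵥ* P ^ m = π := by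
  induction m with
  | zero => rw [pow_zero, vecMul_one]
  | succ m ih => rw [pow_succ, ← vecMul_vecMul, ih, hπ]

lemma abs_pow_apply_sub_le (hP : P ∈ rowStochastic ℝ V) (hπ : π ᵥ* P = π)
    (hπ0 : ∀ i, 0 ≤ π i) (hπ1 : ∑ i, π i = 1) {r : ℕ} (hr : 0 < r)
    (hδ : ∀ i k, δ ≤ (P ^ r) i k) (m : ℕ) (i j : V) :
    |(P ^ m) i j - π j| ≤ (1 - Fintype.card V * δ) ^ (m / r) := by
  set c := (1 - Fintype.card V * δ) ^ (m / r)
  have hπj : π j = ∑ l, π l * (P ^ m) l j := by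
    conv_lhs => rw [← vecMul_pow_of_vecMul_eq hπ m]
    rfl
  have hdev : (P ^ m) i j - π j = ∑ l, π l * ((P ^ m) i j - (P ^ m) l j) := by
    rw [hπj, ← sub_eq_zero]
    simp only [mul_sub, Finset.sum_sub_distrib, ← Finset.sum_mul, hπ1, one_mul, sub_self]
  have hosc : ∀ l, |(P ^ m) i j - (P ^ m) l j| ≤ c := fun l =>
    abs_sub_le_iff.2 ⟨pow_apply_sub_pow_apply_le hP hr hδ j m i l,
      pow_apply_sub_pow_apply_le hP hr hδ j m l i⟩
  calc |(P ^ m) i j - π j| ≤ ∑ l, |π l * ((P ^ m) i j - (P ^ m) l j)| := by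
        rw [hdev]; exact Finset.abs_sum_le_sum_abs _ _
    _ = ∑ l, π l * |(P ^ m) i j - (P ^ m) l j| := by
        simp only [abs_mul, abs_of_nonneg (hπ0 _)]
    _ ≤ ∑ l, π l * c :=
        Finset.sum_le_sum fun l _ => mul_le_mul_of_nonneg_left (hosc l) (hπ0 l)
    _ = c := by rw [← Finset.sum_mul, hπ1, one_mul]

lemma summable_pow_apply_sub (hP : P ∈ rowStochastic ℝ V) (hπ : π ᵥ* P = π)
    (hπ0 : ∀ i, 0 ≤ π i) (hπ1 : ∑ i, π i = 1) {r : ℕ} (hr : 0 < r)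
    (hpos : ∀ i k, 0 < (P ^ r) i k) (i j : V) :
    Summable fun m => (P ^ m) i j - π j := by
  have : Nonempty V := ⟨i⟩
  obtain ⟨⟨k₀, l₀⟩, hmin⟩ := Finite.exists_min fun p : V × V => (P ^ r) p.1 p.2
  have hδ : ∀ i k, (P ^ r) k₀ l₀ ≤ (P ^ r) i k := fun i k => hmin (i, k)
  have hθ0 := sub_nonneg.2 (card_mul_le_one_of_forall_le (pow_mem hP r) hδ i)
  have hθ1 : 1 - Fintype.card V * (P ^ r) k₀ l₀ < 1 := by
    have := mul_pos (Nat.cast_pos.2 (Fintype.card_pos (α := V))) (hpos k₀ l₀)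
    linarith
  refine .of_norm_bounded (summable_pow_div hθ0 hθ1 hr) fun m => ?_
  exact abs_pow_apply_sub_le hP hπ hπ0 hπ1 hr hδ m i j

noncomputable def fundamentalMatrix (P : Matrix V V ℝ) (π : V → ℝ) : Matrix V V ℝ :=
  of fun i j => ∑' m : ℕ, ((P ^ m) i j - π j)

lemma mul_fundamentalMatrix_add (hP : P ∈ rowStochastic ℝ V) (hπ : π ᵥ* P = π)
    (hπ1 : ∑ i, π i = 1) (hsum : ∀ i j, Summable fun m => (P ^ m) i j - π j) :
    (1 - P + of fun _ j => π j) * (fundamentalMatrix P π + of fun _ j => π j) = 1 := by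
  set E : Matrix V V ℝ := of fun _ j => π j
  have hPE : P * E = E := by
    ext i j
    simp [E, mul_apply, ← Finset.sum_mul, sum_row_of_mem_rowStochastic hP]
  have hEP : ∀ m, E * P ^ m = E := fun m => by
    ext i j
    conv_rhs => rw [show E i j = π j from rfl, ← vecMul_pow_of_vecMul_eq hπ m]
    rfl
  have hEE : E * E = E := by
    ext i j
    simp [E, mul_apply, ← Finset.sum_mul, hπ1]
  have hsumm : Summable fun m => P ^ m - E :=
    Pi.summable.2 fun i => Pi.summable.2 fun j => hsum i j
  have hY : fundamentalMatrix P π = ∑' m, (P ^ m - E) := by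
    ext i j
    exact (Pi.hasSum.1 (Pi.hasSum.1 hsumm.hasSum i) j).tsum_eq
  have hstep : ∀ m, (1 - P + E) * (P ^ m - E) = (P ^ m - E) - (P ^ (m + 1) - E) := fun m => by
    simp only [mul_sub, sub_mul, add_mul, one_mul, hPE, hEP, hEE, pow_succ']
    abel
  have htele : (1 - P + E) * fundamentalMatrix P π = 1 - E := by
    rw [hY, ← hsumm.tsum_mul_left, tsum_congr hstep,
      hsumm.tsum_sub ((summable_nat_add_iff 1).2 hsumm), hsumm.tsum_eq_zero_add, pow_zero,
      add_sub_cancel_right]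
  rw [mul_add, htele, add_mul, sub_mul, one_mul, hPE, hEE, sub_self, zero_add, sub_add_cancel]

end Markov

end Matrix

section RandomWalk

variable {V : Type*} [Fintype V] {u : V → V → ℝ}

lemma sum_sum_pos_of_forall_sum_pos [Nonempty V] (hd : ∀ i, 0 < ∑ k, u i k) :
    0 < ∑ i, ∑ j, u i j :=
  Finset.sum_pos (fun i _ => hd i) Finset.univ_nonempty

lemma walkZ_mem_rowStochastic [DecidableEq V] (hnn : ∀ i j, 0 ≤ u i j)
    (hd : ∀ i, 0 < ∑ k, u i k) : walkZ u ∈ rowStochastic ℝ V := by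
  refine mem_rowStochastic_iff_sum.2 ⟨fun i j => div_nonneg (hnn i j) (hd i).le, fun i => ?_⟩
  simp only [walkZ, of_apply, ← Finset.sum_div]
  exact div_self (hd i).ne'

lemma statPi_nonneg (hnn : ∀ i j, 0 ≤ u i j) (i : V) : 0 ≤ statPi u i :=
  div_nonneg (Finset.sum_nonneg fun k _ => hnn i k)
    (Finset.sum_nonneg fun i _ => Finset.sum_nonneg fun k _ => hnn i k)

lemma sum_statPi [Nonempty V] (hd : ∀ i, 0 < ∑ k, u i k) : ∑ i, statPi u i = 1 := by
  simp only [statPi, ← Finset.sum_div]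
  exact div_self (sum_sum_pos_of_forall_sum_pos hd).ne'

lemma statPi_vecMul_walkZ (hsym : ∀ i j, u i j = u j i) (hd : ∀ i, 0 < ∑ k, u i k) :
    statPi u ᵥ* walkZ u = statPi u := by
  ext j
  have hterm : ∀ l, statPi u l * walkZ u l j = u j l / ∑ a, ∑ b, u a b := fun l => by
    rw [statPi, walkZ, of_apply, hsym l j, div_mul_div_comm, mul_comm (∑ k, u l k),
      mul_div_mul_right _ _ (hd l).ne']
  simp only [vecMul, dotProduct, hterm]
  rw [← Finset.sum_div]
  rfl

variable [DecidableEq V]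

lemma sum_pos_of_walkZ_pow_pos (hnn : ∀ i j, 0 ≤ u i j)
    (hprim : ∃ k : ℕ, 0 < k ∧ ∀ i j, 0 < (walkZ u ^ k) i j) (i : V) : 0 < ∑ k, u i k := by
  obtain ⟨k, hk, hpos⟩ := hprim
  refine (Finset.sum_nonneg fun k _ => hnn i k).lt_of_ne fun h => (hpos i i).ne' ?_
  have hrow : ∀ j, walkZ u i j = 0 := fun j => by simp [walkZ, ← h]
  obtain ⟨k, rfl⟩ := Nat.exists_eq_succ_of_ne_zero hk.ne'
  simp [pow_succ', mul_apply, hrow]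

lemma mul_walkY_add (hsym : ∀ i j, u i j = u j i) (hnn : ∀ i j, 0 ≤ u i j)
    (hprim : ∃ k : ℕ, 0 < k ∧ ∀ i j, 0 < (walkZ u ^ k) i j) :
    (1 - walkZ u + of fun _ j => statPi u j) * (walkY u + of fun _ j => statPi u j) = 1 := by
  rcases isEmpty_or_nonempty V with _ | _
  · exact Subsingleton.elim _ _
  have hd := sum_pos_of_walkZ_pow_pos hnn hprim
  obtain ⟨r, hr, hpos⟩ := hprim
  have hZ := walkZ_mem_rowStochastic hnn hd
  have hπ := statPi_vecMul_walkZ hsym hd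
  exact mul_fundamentalMatrix_add hZ hπ (sum_statPi hd)
    (summable_pow_apply_sub hZ hπ (statPi_nonneg hnn) (sum_statPi hd) hr hpos)

noncomputable def walkPotential (u : V → V → ℝ) (q : V → ℝ) : V → ℝ :=
  (walkY u + of fun _ j => statPi u j) *ᵥ fun i => q i / ∑ k, u i k

lemma weightedLaplacian_mulVec_walkPotential (hsym : ∀ i j, u i j = u j i)
    (hnn : ∀ i j, 0 ≤ u i j) (hprim : ∃ k : ℕ, 0 < k ∧ ∀ i j, 0 < (walkZ u ^ k) i j)
    {q : V → ℝ} (hq : ∑ i, q i = 0) :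
    weightedLaplacian u *ᵥ walkPotential u q = q := by
  ext i
  have : Nonempty V := ⟨i⟩
  have hd := sum_pos_of_walkZ_pow_pos hnn hprim
  set N : Matrix V V ℝ := 1 - walkZ u + of fun _ j => statPi u j
  have hNx : N *ᵥ walkPotential u q = fun i => q i / ∑ k, u i k := by
    rw [walkPotential, mulVec_mulVec, mul_walkY_add hsym hnn hprim, one_mulVec]
  have hπN : statPi u ᵥ* N = statPi u := by
    rw [vecMul_add, vecMul_sub, vecMul_one, statPi_vecMul_walkZ hsym hd, sub_self, zero_add]
    ext j
    simp only [vecMul, dotProduct, of_apply, ← Finset.sum_mul, sum_statPi hd, one_mul]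
  have hπx : statPi u ⬝ᵥ walkPotential u q = 0 := by
    have hterm : ∀ i, statPi u i * (q i / ∑ k, u i k) = q i / ∑ a, ∑ b, u a b := fun i => by
      rw [statPi, div_mul_div_comm, mul_comm, mul_div_mul_right _ _ (hd i).ne']
    rw [← hπN, ← dotProduct_mulVec, hNx, dotProduct]
    simp only [hterm, ← Finset.sum_div, hq, zero_div]
  have hrow : (N *ᵥ walkPotential u q) i = walkPotential u q i -
      (∑ j, u i j * walkPotential u q j) / ∑ k, u i k + statPi u ⬝ᵥ walkPotential u q := by
    rw [add_mulVec, sub_mulVec, one_mulVec]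
    simp only [Pi.add_apply, Pi.sub_apply, mulVec, dotProduct, walkZ, of_apply,
      div_mul_eq_mul_div, Finset.sum_div]
  rw [hNx, hπx, add_zero] at hrow
  rw [weightedLaplacian_mulVec_apply]
  simp only [mul_sub, Finset.sum_sub_distrib, ← Finset.sum_mul]
  have := (hd i).ne'
  field_simp at hrow
  linarith

lemma walkPotential_apply (a v x : V) :
    walkPotential u (Pi.single a 1 - Pi.single v 1) x =
      (walkY u x a + statPi u a) / (∑ k, u a k) - (walkY u x v + statPi u v) / (∑ k, u v k) := by
  simp only [walkPotential, mulVec, dotProduct, Pi.sub_apply, sub_div, mul_sub,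
    Finset.sum_sub_distrib, Pi.single_apply, ite_div, zero_div, mul_ite, mul_zero,
    Finset.sum_ite_eq', Finset.mem_univ, if_true, Matrix.add_apply, of_apply]
  ring

lemma walkM_add_walkM_eq (hd : ∀ i, 0 < ∑ k, u i k) (a v : V) :
    walkM u a v + walkM u v a = (∑ i, ∑ j, u i j) *
      ((Pi.single a 1 - Pi.single v 1) ⬝ᵥ walkPotential u (Pi.single a 1 - Pi.single v 1)) := by
  have : Nonempty V := ⟨a⟩
  have := (sum_sum_pos_of_forall_sum_pos hd).ne'
  have := (hd a).ne'
  have := (hd v).ne'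
  rw [sub_dotProduct, single_one_dotProduct, single_one_dotProduct, walkPotential_apply,
    walkPotential_apply, walkM, walkM, statPi, statPi]
  field_simp
  ring

end RandomWalk

/-- Lemma 10 (Monotonicity Law): if `w̃_ij ≤ w_ij` are two symmetric
nonnegative edge-weight functions on the same node set, with both induced
random walks irreducible and aperiodic, then the mean commute times satisfy
`m_av + m_va ≤ (w/w̃)(m̃_av + m̃_va)` for all nodes `a`, `v`. -/
theorem stmt_18 {n : ℕ}
    (w wt : Fin n → Fin n → ℝ)
    (hsym : ∀ i j, w i j = w j i) (hsymt : ∀ i j, wt i j = wt j i)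
    (hnonneg : ∀ i j, 0 ≤ wt i j)
    (hle : ∀ i j, wt i j ≤ w i j)
    -- both induced random walks are irreducible and aperiodic (primitive)
    (hprim : ∃ k : ℕ, 0 < k ∧ ∀ i j, 0 < (walkZ w ^ k) i j)
    (hprimt : ∃ k : ℕ, 0 < k ∧ ∀ i j, 0 < (walkZ wt ^ k) i j) :
    ∀ a v : Fin n, walkM w a v + walkM w v a ≤
      ((∑ i, ∑ j, w i j) / (∑ i, ∑ j, wt i j)) * (walkM wt a v + walkM wt v a) := by
  intro a v
  have : Nonempty (Fin n) := ⟨a⟩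
  have hnn : ∀ i j, 0 ≤ w i j := fun i j => (hnonneg i j).trans (hle i j)
  set q : Fin n → ℝ := Pi.single a 1 - Pi.single v 1
  have hq : ∑ i, q i = 0 := by simp [q]
  have hL : weightedLaplacian wt ≤ weightedLaplacian w := by
    rw [Matrix.le_iff, ← weightedLaplacian_sub]
    exact posSemidef_weightedLaplacian (fun i j => by simp [hsym i j, hsymt i j])
      (fun i j => sub_nonneg.2 (hle i j))
  have hres : q ⬝ᵥ walkPotential w q ≤ q ⬝ᵥ walkPotential wt q :=
    dotProduct_le_of_le_of_mulVec_eq (posSemidef_weightedLaplacian hsymt hnonneg).nonneg hL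
      (weightedLaplacian_mulVec_walkPotential hsym hnn hprim hq)
      (weightedLaplacian_mulVec_walkPotential hsymt hnonneg hprimt hq)
  have hdw := sum_pos_of_walkZ_pow_pos hnn hprim
  have hdt := sum_pos_of_walkZ_pow_pos hnonneg hprimt
  rw [walkM_add_walkM_eq hdw, walkM_add_walkM_eq hdt, ← mul_assoc,
    div_mul_cancel₀ _ (sum_sum_pos_of_forall_sum_pos hdt).ne']
  exact mul_le_mul_of_nonneg_left hres (sum_sum_pos_of_forall_sum_pos hdw).le
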